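/- Let g: X → ℝ ∪ {+∞} be a lower semicontinuous, proper, convex function, h: X → ℝ ∪ {+∞} a proper generalized polyhedral convex function, and C ⊆ X a nonempty closed convex set with C ⊆ dom g and C ⊆ int(dom h). Then the set S₁ of local solutions of the problem: minimize g(x) − h(x) subject to x ∈ C, is the union of finitely many convex subsets of C. -/

import Mathlib

open Pointwise Topology

/-- A generalized polyhedral convex set: the intersection of a closed affine subspace
with finitely many closed half-spaces given by continuous linear functionals. -/
def IsGPCS (X : Type*) [AddCommGroup X] [Module ℝ X] [TopologicalSpace X] (S : Set X) : Prop :=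
  ∃ (L : AffineSubspace ℝ X) (p : ℕ) (a : Fin p → (X →L[ℝ] ℝ)) (c : Fin p → ℝ),
    IsClosed (L : Set X) ∧ S = {x : X | x ∈ L ∧ ∀ k, a k x ≤ c k}

/-- The epigraph of an extended-real-valued function. -/
def epigraph {X : Type*} (ψ : X → EReal) : Set (X × ℝ) := {p | ψ p.1 ≤ (p.2 : EReal)}

/-- A generalized polyhedral convex function: one whose epigraph is a generalized
polyhedral convex set in `X × ℝ`. -/
def IsGPCF (X : Type*) [AddCommGroup X] [Module ℝ X] [TopologicalSpace X] (ψ : X → EReal) : Prop :=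
  IsGPCS (X × ℝ) (epigraph ψ)

/-- A proper function: not identically `+∞` and never `-∞`. -/
def ProperFn {X : Type*} (ψ : X → EReal) : Prop := (∃ x, ψ x ≠ ⊤) ∧ ∀ x, ψ x ≠ ⊥

/-- Convexity of an extended-real-valued function, via convexity of the epigraph. -/
def ConvexFn {X : Type*} [AddCommGroup X] [Module ℝ X] (ψ : X → EReal) : Prop :=
  Convex ℝ (epigraph ψ)

/-- The effective domain of an extended-real-valued function. -/
def domFn {X : Type*} (ψ : X → EReal) : Set X := {x | ψ x ≠ ⊤}

open Classical in
/-- The indicator function of a set: `0` on the set, `+∞` outside. -/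
noncomputable def indFn {X : Type*} (C : Set X) : X → EReal := fun x => if x ∈ C then 0 else ⊤

open Classical in
/-- The DC objective `g - h` with the convention `(+∞) - (+∞) = +∞`. -/
noncomputable def dcObj {X : Type*} (g h : X → EReal) : X → EReal :=
  fun x => if g x = ⊤ ∧ h x = ⊤ then ⊤ else g x - h x

/-- The subdifferential (in the sense of convex analysis) of `φ` at `x₀`. -/
def SubdiffAt {X : Type*} [AddCommGroup X] [Module ℝ X] [TopologicalSpace X]
    (φ : X → EReal) (x₀ : X) : Set (X →L[ℝ] ℝ) :=
  {p | ∀ x : X, ((p x - p x₀ : ℝ) : EReal) ≤ φ x - φ x₀}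

/-- The subdifferential of a function defined on the dual space, with values in `X`
(the dual of `X*` in the weak* topology). -/
def SubdiffStarAt {X : Type*} [AddCommGroup X] [Module ℝ X] [TopologicalSpace X]
    (Φ : (X →L[ℝ] ℝ) → EReal) (p₀ : X →L[ℝ] ℝ) : Set X :=
  {x | ∀ p : X →L[ℝ] ℝ, ((p x - p₀ x : ℝ) : EReal) ≤ Φ p - Φ p₀}

/-- The normal cone to a convex set `C` at `x₀ ∈ C`. -/
def normalConeAt {X : Type*} [AddCommGroup X] [Module ℝ X] [TopologicalSpace X]
    (C : Set X) (x₀ : X) : Set (X →L[ℝ] ℝ) :=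
  {p | ∀ x ∈ C, p x - p x₀ ≤ 0}

/-- The Fenchel conjugate function. -/
noncomputable def conjFn {X : Type*} [AddCommGroup X] [Module ℝ X] [TopologicalSpace X]
    (φ : X → EReal) : (X →L[ℝ] ℝ) → EReal :=
  fun p => ⨆ x : X, (((p x : ℝ) : EReal) - φ x)

/-- `x₀` is a local solution of: minimize `g - h` over `C`. -/
def IsLocalSolution {X : Type*} [TopologicalSpace X] (g h : X → EReal) (C : Set X)
    (x₀ : X) : Prop :=
  x₀ ∈ C ∧ ∃ U ∈ nhds x₀, ∀ x ∈ C ∩ U, dcObj g h x₀ ≤ dcObj g h x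

/-- `x₀` is a (global) solution of: minimize `g - h` over `C`. -/
def IsSolution {X : Type*} (g h : X → EReal) (C : Set X) (x₀ : X) : Prop :=
  x₀ ∈ C ∧ ∀ x ∈ C, dcObj g h x₀ ≤ dcObj g h x

/-- `S` is open in the relative topology of `C`. -/
def RelOpenIn {X : Type*} [TopologicalSpace X] (C S : Set X) : Prop :=
  ∃ V : Set X, IsOpen V ∧ S = C ∩ V

/-- A semi-closed generalized polyhedral convex subset of `C`: the intersection of a
generalized polyhedral convex subset of `C` with a convex subset of `C` that is open
in the relative topology of `C`. -/
def IsSemiClosedGPCSIn {X : Type*} [AddCommGroup X] [Module ℝ X] [TopologicalSpace X]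
    (C S : Set X) : Prop :=
  ∃ P Q : Set X, IsGPCS X P ∧ P ⊆ C ∧ Convex ℝ Q ∧ Q ⊆ C ∧ RelOpenIn C Q ∧ S = P ∩ Q

/-!
On `C` both `g` and `h` are finite, and on its domain the generalized polyhedral function `h`
is the maximum of finitely many continuous affine functions `ℓ i`; so on `C` the objective is
`G - ⨆ i, ℓ i` with `G` convex. Sort the points of `C` by their active set `J`, the indices
attaining the maximum. A point with active set `J` is a local solution iff it minimizes every
convex function `G - ℓ j`, `j ∈ J`, over `C`: a local minimum of a convex function is global,
and conversely near the point only indices of `J` can become active. For fixed `J` these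
conditions are convex, so each `J` contributes one convex piece.
-/

open Filter

theorem ConvexOn.convex_setOf_isMinOn {𝕜 E β : Type*} [Semiring 𝕜] [PartialOrder 𝕜]
    [AddCommMonoid E] [SMul 𝕜 E] [AddCommMonoid β] [PartialOrder β] [IsOrderedAddMonoid β]
    [Module 𝕜 β] [PosSMulMono 𝕜 β] {s : Set E} {f : E → β} (hf : ConvexOn 𝕜 s f) :
    Convex 𝕜 {x ∈ s | IsMinOn f s x} := by
  rintro x ⟨hx, hxmin⟩ y ⟨hy, hymin⟩ a b ha hb hab
  refine ⟨hf.1 hx hy ha hb hab, fun z hz => ?_⟩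
  calc f (a • x + b • y) ≤ a • f x + b • f y := hf.2 hx hy ha hb hab
    _ ≤ a • f z + b • f z :=
      add_le_add (smul_le_smul_of_nonneg_left (hxmin hz) ha)
        (smul_le_smul_of_nonneg_left (hymin hz) hb)
    _ = f z := by rw [← add_smul, hab, one_smul]

theorem AffineMap.concaveOn {𝕜 E β : Type*} [Ring 𝕜] [PartialOrder 𝕜] [AddCommGroup E]
    [Module 𝕜 E] [AddCommGroup β] [PartialOrder β] [Module 𝕜 β] (f : E →ᵃ[𝕜] β) {s : Set E}
    (hs : Convex 𝕜 s) : ConcaveOn 𝕜 s f :=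
  ⟨hs, fun _ _ _ _ _ _ _ _ hab => (Convex.combo_affine_apply hab).ge⟩

section MaxAffine

variable {X ι : Type*} [AddCommGroup X] [Module ℝ X] [TopologicalSpace X]

def activeArgmin (C : Set X) (G : X → ℝ) (ℓ : ι → X →ᴬ[ℝ] ℝ) (J : Set ι) : Set X :=
  {x ∈ C | (∀ j ∈ J, ∀ k, ℓ k x ≤ ℓ j x) ∧ (∀ j ∈ J, ∀ k ∉ J, ℓ k x < ℓ j x) ∧
    ∀ j ∈ J, IsMinOn (G - ⇑(ℓ j)) C x}

variable {C : Set X} {G : X → ℝ} (ℓ : ι → X →ᴬ[ℝ] ℝ)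

theorem activeArgmin_subset (J : Set ι) : activeArgmin C G ℓ J ⊆ C := fun _ hx => hx.1

theorem convex_activeArgmin (hC : Convex ℝ C) (hG : ConvexOn ℝ C G) (J : Set ι) :
    Convex ℝ (activeArgmin C G ℓ J) := by
  rintro x ⟨hxC, hxle, hxlt, hxmin⟩ y ⟨hyC, hyle, hylt, hymin⟩ a b ha hb hab
  have hcomb : ∀ j k, ℓ k (a • x + b • y) - ℓ j (a • x + b • y) =
      a • (ℓ k x - ℓ j x) + b • (ℓ k y - ℓ j y) := fun j k =>
    Convex.combo_affine_apply (f := ((ℓ k - ℓ j : X →ᴬ[ℝ] ℝ) : X →ᵃ[ℝ] ℝ)) hab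
  refine ⟨hC hxC hyC ha hb hab, fun j hj k => ?_, fun j hj k hk => ?_, fun j hj => ?_⟩
  · have := convex_Iic (0 : ℝ) (sub_nonpos.2 (hxle j hj k)) (sub_nonpos.2 (hyle j hj k)) ha hb hab
    rw [← hcomb] at this
    exact sub_nonpos.1 this
  · have := convex_Iio (0 : ℝ) (sub_neg.2 (hxlt j hj k hk)) (sub_neg.2 (hylt j hj k hk)) ha hb hab
    rw [← hcomb] at this
    exact sub_neg.1 this
  · exact ((hG.sub ((ℓ j : X →ᵃ[ℝ] ℝ).concaveOn hC)).convex_setOf_isMinOn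
      ⟨hxC, hxmin j hj⟩ ⟨hyC, hymin j hj⟩ ha hb hab).2

variable [Finite ι] [Nonempty ι]

theorem isLocalMinOn_of_mem_activeArgmin {J : Set ι} (hJ : J.Nonempty) {x : X}
    (hx : x ∈ activeArgmin C G ℓ J) : IsLocalMinOn (G - fun y => ⨆ i, ℓ i y) C x := by
  obtain ⟨hxC, hxle, hxlt, hxmin⟩ := hx
  obtain ⟨j₀, hj₀⟩ := hJ
  have hnear : ∀ᶠ y in 𝓝 x, ∀ k ∉ J, ℓ k y < ℓ j₀ y :=
    eventually_all.2 fun k => eventually_imp_distrib_left.2 fun hk =>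
      (ℓ k).continuous.continuousAt.eventually_lt (ℓ j₀).continuous.continuousAt
        (hxlt j₀ hj₀ k hk)
  filter_upwards [self_mem_nhdsWithin, nhdsWithin_le_nhds hnear] with y hyC hy
  obtain ⟨j, hj⟩ := exists_eq_ciSup_of_finite (f := fun i => ℓ i y)
  have hjJ : j ∈ J := by
    by_contra hjJ
    have := le_ciSup (Finite.bddAbove_range fun i => ℓ i y) j₀
    linarith [hy j hjJ]
  have hxj : ⨆ i, ℓ i x = ℓ j x :=
    (IsGreatest.isLUB ⟨Set.mem_range_self j, Set.forall_mem_range.2 (hxle j hjJ)⟩).ciSup_eq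
  calc G x - ⨆ i, ℓ i x = G x - ℓ j x := by rw [hxj]
    _ ≤ G y - ℓ j y := hxmin j hjJ hyC
    _ = G y - ⨆ i, ℓ i y := by rw [hj]

variable [IsTopologicalAddGroup X] [ContinuousSMul ℝ X]

theorem exists_mem_activeArgmin_of_isLocalMinOn (hC : Convex ℝ C) (hG : ConvexOn ℝ C G)
    {x : X} (hxC : x ∈ C) (hx : IsLocalMinOn (G - fun y => ⨆ i, ℓ i y) C x) :
    ∃ J : Set ι, J.Nonempty ∧ x ∈ activeArgmin C G ℓ J := by
  have hle : ∀ y k, ℓ k y ≤ ⨆ i, ℓ i y := fun y => le_ciSup (Finite.bddAbove_range _)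
  refine ⟨{j | ℓ j x = ⨆ i, ℓ i x}, exists_eq_ciSup_of_finite, hxC,
    fun j hj k => hj ▸ hle x k, fun j hj k hk => hj ▸ (hle x k).lt_of_ne hk, fun j hj => ?_⟩
  -- `G - ℓ j` lies above `G - ⨆ i, ℓ i` and touches it at `x`
  refine IsMinOn.of_isLocalMinOn_of_convexOn hxC ?_ (hG.sub ((ℓ j : X →ᵃ[ℝ] ℝ).concaveOn hC))
  filter_upwards [hx] with y hy
  simp only [Pi.sub_apply, Set.mem_ofPred_eq] at hy hj ⊢
  linarith [hle y j]

theorem setOf_isLocalMinOn_eq_iUnion_activeArgmin (hC : Convex ℝ C) (hG : ConvexOn ℝ C G) :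
    {x | x ∈ C ∧ IsLocalMinOn (G - fun y => ⨆ i, ℓ i y) C x} =
      ⋃ J : {J : Set ι // J.Nonempty}, activeArgmin C G ℓ J := by
  ext x
  simp only [Set.mem_ofPred_eq, Set.mem_iUnion, Subtype.exists, exists_prop]
  constructor
  · rintro ⟨hxC, hx⟩
    exact exists_mem_activeArgmin_of_isLocalMinOn ℓ hC hG hxC hx
  · rintro ⟨J, hJ, hx⟩
    exact ⟨hx.1, isLocalMinOn_of_mem_activeArgmin ℓ hJ hx⟩

end MaxAffine

theorem le_iff_forall_div_le_of_le_iff_forall_mul_le {κ : Type*} {β d : κ → ℝ} {s : ℝ}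
    (hs : ∀ t, s ≤ t ↔ ∀ k, β k * t ≤ d k) (t : ℝ) :
    s ≤ t ↔ ∀ k, β k < 0 → d k / β k ≤ t := by
  refine ⟨fun hst k hk => ?_, fun H => (hs t).2 fun k => ?_⟩
  · rw [div_le_iff_of_neg hk, mul_comm]
    exact (hs t).1 hst k
  rcases lt_trichotomy (β k) 0 with hk | hk | hk
  · have := (div_le_iff_of_neg hk).1 (H k hk)
    linarith
  · simpa [hk] using (hs s).1 le_rfl k
  · -- `β k > 0` would bound the half-line `[s, ∞)` from above
    set t' := max s (d k / β k + 1)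
    have h1 := (hs t').1 (le_max_left _ _) k
    have h2 : d k / β k < t' := lt_of_lt_of_le (lt_add_one _) (le_max_right _ _)
    rw [div_lt_iff₀ hk] at h2
    linarith

theorem ConvexFn.convexOn_toReal {X : Type*} [AddCommGroup X] [Module ℝ X] {g : X → EReal}
    (hg : ConvexFn g) {C : Set X} (hC : Convex ℝ C) (hfin : ∀ x ∈ C, g x ≠ ⊤) (hbot : ∀ x ∈ C, g x ≠ ⊥) :
    ConvexOn ℝ C fun x => (g x).toReal := by
  refine ⟨hC, fun x hx y hy a b ha hb hab => ?_⟩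
  have hepi : ∀ z ∈ C, (z, (g z).toReal) ∈ epigraph g := fun z hz =>
    (EReal.coe_toReal (hfin z hz) (hbot z hz)).ge
  have hcomb : g (a • x + b • y) ≤ ↑(a * (g x).toReal + b * (g y).toReal) := by
    simpa [epigraph] using hg (hepi x hx) (hepi y hy) ha hb hab
  have hz := hC hx hy ha hb hab
  have := EReal.toReal_le_toReal hcomb (hbot _ hz) (EReal.coe_ne_top _)
  rwa [EReal.toReal_coe] at this

section Epigraph

variable {X : Type*} [AddCommGroup X] [Module ℝ X] [TopologicalSpace X]

theorem le_iff_of_epigraph_eq {κ : Type*} {h : X → EReal} {L : AffineSubspace ℝ (X × ℝ)}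
    {a : κ → X × ℝ →L[ℝ] ℝ} {c : κ → ℝ} (hepi : epigraph h = {q | q ∈ L ∧ ∀ k, a k q ≤ c k})
    {x : X} {s : ℝ} (hx : h x = s) (t : ℝ) :
    s ≤ t ↔ ∀ k, a k (0, 1) * t ≤ c k - a k (x, 0) := by
  have hmem : ∀ t : ℝ, s ≤ t ↔ (x, t) ∈ L ∧ ∀ k, a k (x, t) ≤ c k := fun t => by
    rw [← EReal.coe_le_coe_iff, ← hx]
    exact Set.ext_iff.1 hepi (x, t)
  have hline : (x, t) ∈ L := by
    convert AffineMap.lineMap_mem (t - s) ((hmem s).1 le_rfl).1 ((hmem (s + 1)).1 (by linarith)).1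
      using 1
    simp [AffineMap.lineMap_apply]
  have hsplit : ∀ k, a k (x, t) = a k (x, 0) + a k (0, 1) * t := fun k => by
    have : ((x, t) : X × ℝ) = (x, 0) + t • (0, 1) := by simp
    rw [this, map_add, map_smul, smul_eq_mul, mul_comm]
  simp only [hmem, hline, true_and, hsplit]
  exact forall_congr' fun k => by constructor <;> intro <;> linarith

theorem IsGPCF.exists_eq_ciSup_affine {h : X → EReal} (hgpcf : IsGPCF X h) (hh : ProperFn h) :
    ∃ (ι : Type) (_ : Finite ι) (_ : Nonempty ι) (ℓ : ι → X →ᴬ[ℝ] ℝ),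
      ∀ x ∈ domFn h, h x = ↑(⨆ i, ℓ i x) := by
  obtain ⟨L, p, a, c, -, hepi⟩ := hgpcf
  set β : Fin p → ℝ := fun k => a k (0, 1)
  -- the constraints with `β k < 0` bound `t` from below; the others hold on the whole domain
  let ℓ : {k // β k < 0} → X →ᴬ[ℝ] ℝ := fun k => (β k)⁻¹ •
    (ContinuousAffineMap.const ℝ X (c k) - ((a k).comp (.inl ℝ X ℝ)).toContinuousAffineMap)
  have key : ∀ x ∈ domFn h, ∀ t : ℝ, (h x).toReal ≤ t ↔ ∀ k, ℓ k x ≤ t := fun x hx t => by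
    rw [le_iff_forall_div_le_of_le_iff_forall_mul_le
      (le_iff_of_epigraph_eq hepi (EReal.coe_toReal hx (hh.2 x)).symm) t]
    simp [ℓ, β, div_eq_inv_mul]
  obtain ⟨x₀, hx₀⟩ := hh.1
  have : Nonempty {k // β k < 0} := by
    by_contra hempty
    rw [not_nonempty_iff] at hempty
    have := (key x₀ hx₀ ((h x₀).toReal - 1)).2 fun k => isEmptyElim k
    linarith
  refine ⟨_, inferInstance, this, ℓ, fun x hx => ?_⟩
  rw [← EReal.coe_toReal hx (hh.2 x), EReal.coe_eq_coe_iff]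
  exact eq_of_forall_ge_iff fun t =>
    (key x hx t).trans (ciSup_le_iff (Finite.bddAbove_range _)).symm

end Epigraph

theorem isLocalSolution_iff_isLocalMinOn {X : Type*} [TopologicalSpace X] {g h : X → EReal}
    {C : Set X} {f : X → ℝ} (hf : ∀ x ∈ C, dcObj g h x = f x) {x : X} :
    IsLocalSolution g h C x ↔ x ∈ C ∧ IsLocalMinOn f C x := by
  constructor
  · rintro ⟨hx, U, hU, hmin⟩
    refine ⟨hx, eventually_nhdsWithin_iff.2 (eventually_of_mem hU fun y hyU hy => ?_)⟩
    simpa [hf x hx, hf y hy] using hmin y ⟨hy, hyU⟩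
  · rintro ⟨hx, hmin⟩
    obtain ⟨U, hU, hUmin⟩ := eventually_iff_exists_mem.1 (eventually_nhdsWithin_iff.1 hmin)
    exact ⟨hx, U, hU, fun y ⟨hy, hyU⟩ => by simpa [hf x hx, hf y hy] using hUmin y hyU hy⟩

theorem stmt6_general {X : Type*} [AddCommGroup X] [Module ℝ X] [TopologicalSpace X]
    [IsTopologicalAddGroup X] [ContinuousSMul ℝ X]
    (g h : X → EReal)
    (hg2 : ProperFn g) (hg3 : ConvexFn g)
    (hh2 : ProperFn h) (hh3 : IsGPCF X h)
    (C : Set X) (hC3 : Convex ℝ C)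
    (hCg : C ⊆ domFn g) (hCh : C ⊆ interior (domFn h)) :
    ∃ (n : ℕ) (A : Fin n → Set X), (∀ i, Convex ℝ (A i) ∧ A i ⊆ C) ∧
      {x : X | IsLocalSolution g h C x} = ⋃ i, A i := by
  obtain ⟨ι, _, _, ℓ, hℓ⟩ := hh3.exists_eq_ciSup_affine hh2
  set G : X → ℝ := fun x => (g x).toReal
  have hG : ConvexOn ℝ C G := hg3.convexOn_toReal hC3 hCg fun x _ => hg2.2 x
  have hobj : ∀ x ∈ C, dcObj g h x = ↑((G - fun y => ⨆ i, ℓ i y) x) := fun x hx => by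
    have hgx : g x = G x := (EReal.coe_toReal (hCg hx) (hg2.2 x)).symm
    simp [dcObj, hgx, hℓ x (interior_subset (hCh hx)), EReal.coe_sub]
  have hsol : {x | IsLocalSolution g h C x} =
      ⋃ J : {J : Set ι // J.Nonempty}, activeArgmin C G ℓ J := by
    simp_rw [isLocalSolution_iff_isLocalMinOn hobj]
    exact setOf_isLocalMinOn_eq_iUnion_activeArgmin ℓ hC3 hG
  obtain ⟨n, ⟨e⟩⟩ := Finite.exists_equiv_fin {J : Set ι // J.Nonempty}
  refine ⟨n, fun i => activeArgmin C G ℓ (e.symm i), fun i =>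
    ⟨convex_activeArgmin ℓ hC3 hG _, activeArgmin_subset ℓ _⟩, ?_⟩
  rw [hsol, e.symm.surjective.iUnion_comp fun J => activeArgmin C G ℓ J]

/-- the local solution set is the union of finitely many convex
subsets of `C`. -/
theorem stmt6 {X : Type*} [AddCommGroup X] [Module ℝ X] [TopologicalSpace X]
    [IsTopologicalAddGroup X] [ContinuousSMul ℝ X] [LocallyConvexSpace ℝ X] [T2Space X]
    (g h : X → EReal)
    (hg1 : LowerSemicontinuous g) (hg2 : ProperFn g) (hg3 : ConvexFn g)
    (hh2 : ProperFn h) (hh3 : IsGPCF X h)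
    (C : Set X) (hC1 : C.Nonempty) (hC2 : IsClosed C) (hC3 : Convex ℝ C)
    (hCg : C ⊆ domFn g) (hCh : C ⊆ interior (domFn h)) :
    ∃ (n : ℕ) (A : Fin n → Set X), (∀ i, Convex ℝ (A i) ∧ A i ⊆ C) ∧
      {x : X | IsLocalSolution g h C x} = ⋃ i, A i :=
  stmt6_general g h hg2 hg3 hh2 hh3 C hC3 hCg hCh
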